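/- arXiv:2411.11334 — 5 statements merged into one kernel-verified Lean document; each statement's English description precedes it below -/
import Mathlib

section
/- Let n ≥ 1, b < 2, ω > 0, p > 0, c ∈ ℝ and α, β ∈ ℝ. Set μ := max{2α + (2−b−n)β, 2α − nβ} and β̃ := min{β, 0}. Then every φ ∈ W_b^{1,2} with ∫_{ℝⁿ} |x|^c |φ|^{p+2} dx < ∞ satisfies μ·S_{ω,0}(φ) − K^{α,β}_{ω,0}(φ) ≥ ((2−b)|β|/2)·min{‖∇φ‖²_{b,2}, ω‖φ‖₂²} + ((pα − (2−b+c)β + (2−b)β̃)/(p+2))·‖φ‖^{p+2}_{c,p+2}. -/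
open MeasureTheory Real Filter

abbrev ESp (n : ℕ) := EuclideanSpace ℝ (Fin n)

noncomputable def wInt (n : ℕ) (a q : ℝ) (f : ESp n → ℂ) : ℝ :=
  ∫ x : ESp n, ‖x‖ ^ a * ‖f x‖ ^ q

noncomputable def gradInt (n : ℕ) (b : ℝ) (f : ESp n → ℂ) : ℝ :=
  ∫ x : ESp n, ‖x‖ ^ b * ‖fderiv ℝ f x‖ ^ 2

/-- Membership in the weighted Sobolev space `W_b^{1,2}`. -/
def memW (n : ℕ) (b : ℝ) (f : ESp n → ℂ) : Prop :=
  Differentiable ℝ f ∧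
  Integrable (fun x : ESp n => ‖f x‖ ^ (2:ℝ)) ∧
  Integrable (fun x : ESp n => ‖x‖ ^ b * ‖fderiv ℝ f x‖ ^ 2)

/-- Radial symmetry. -/
def IsRadial (n : ℕ) (f : ESp n → ℂ) : Prop :=
  ∀ x y : ESp n, ‖x‖ = ‖y‖ → f x = f y

noncomputable def Vterm (n : ℕ) (V : ESp n → ℝ) (φ : ESp n → ℂ) : ℝ :=
  ∫ x : ESp n, V x * ‖φ x‖ ^ 2

noncomputable def VdV (n : ℕ) (V : ESp n → ℝ) (φ : ESp n → ℂ) : ℝ :=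
  ∫ x : ESp n, (fderiv ℝ V x x) * ‖φ x‖ ^ 2

noncomputable def Sfun (n : ℕ) (b c p ω : ℝ) (V : ESp n → ℝ) (φ : ESp n → ℂ) : ℝ :=
  (1/2) * gradInt n b φ + (1/2) * Vterm n V φ + (ω/2) * wInt n 0 2 φ
    - (1/(p+2)) * wInt n c (p+2) φ

noncomputable def Kfun (n : ℕ) (b c p ω α β : ℝ) (V : ESp n → ℝ) (φ : ESp n → ℂ) : ℝ :=
  ((2*α + (2-b-(n:ℝ))*β)/2) * gradInt n b φ
  + ((2*α - (n:ℝ)*β)/2) * (Vterm n V φ + ω * wInt n 0 2 φ)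
  - (β/2) * VdV n V φ
  - ((α*(p+2) - ((n:ℝ)+c)*β)/(p+2)) * wInt n c (p+2) φ

noncomputable def Ebv (n : ℕ) (b c p : ℝ) (V : ESp n → ℝ) (u : ESp n → ℂ) : ℝ :=
  (1/2) * gradInt n b u + (1/2) * Vterm n V u - (1/(p+2)) * wInt n c (p+2) u

noncomputable def Pfun (n : ℕ) (b c p : ℝ) (V : ESp n → ℝ) (u : ESp n → ℂ) : ℝ :=
  gradInt n b u - (1/(2-b)) * VdV n V u
    - (((n:ℝ)*p - 2*c)/((2-b)*(p+2))) * wInt n c (p+2) u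

/-- Weak solution of `∇·(|x|^b ∇Q) − ωQ + |x|^c |Q|^p Q = 0`. -/
def IsWeakSol (n : ℕ) (b c p ω : ℝ) (Q : ESp n → ℂ) : Prop :=
  ∀ ψ : ESp n → ℂ, ContDiff ℝ (⊤ : ℕ∞) ψ → HasCompactSupport ψ →
    (∫ x : ESp n, ((‖x‖ ^ b : ℝ) : ℂ) *
        ∑ i : Fin n, fderiv ℝ Q x (EuclideanSpace.single i 1) *
          starRingEnd ℂ (fderiv ℝ ψ x (EuclideanSpace.single i 1)))
      + (ω : ℂ) * ∫ x : ESp n, Q x * starRingEnd ℂ (ψ x)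
      = ∫ x : ESp n, ((‖x‖ ^ c : ℝ) : ℂ) * ((‖Q x‖ ^ p : ℝ) : ℂ) *
          (Q x * starRingEnd ℂ (ψ x))

noncomputable def mvalV (n : ℕ) (b c p ω α β : ℝ) (V : ESp n → ℝ) : ℝ :=
  sInf {s : ℝ | ∃ ψ : ESp n → ℂ, memW n b ψ ∧ ψ ≠ 0 ∧
    Integrable (fun x : ESp n => ‖x‖ ^ c * ‖ψ x‖ ^ (p+2)) ∧
    Integrable (fun x : ESp n => V x * ‖ψ x‖ ^ 2) ∧
    Integrable (fun x : ESp n => (fderiv ℝ V x x) * ‖ψ x‖ ^ 2) ∧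
    Kfun n b c p ω α β V ψ = 0 ∧ s = Sfun n b c p ω V ψ}
/-- lower bound for `μ·S_{ω,0}(φ) − K^{α,β}_{ω,0}(φ)`. -/
theorem S_minus_K_lower_bound
    (n : ℕ) (hn : 1 ≤ n) (b ω p c α β : ℝ) (hb : b < 2) (hω : 0 < ω) (hp : 0 < p) :
    ∀ φ : ESp n → ℂ, memW n b φ →
      Integrable (fun x : ESp n => ‖x‖ ^ c * ‖φ x‖ ^ (p+2)) →
      ((2-b)*|β|/2) * min (gradInt n b φ) (ω * wInt n 0 2 φ)
          + ((p*α - (2-b+c)*β + (2-b)*(min β 0))/(p+2)) * wInt n c (p+2) φ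
        ≤ max (2*α + (2-b-(n:ℝ))*β) (2*α - (n:ℝ)*β)
              * Sfun n b c p ω (fun _ => 0) φ
            - Kfun n b c p ω α β (fun _ => 0) φ := by
  intro φ hφ hI
  have hV0 : Vterm n (fun _ => 0) φ = 0 := by simp [Vterm]
  have hVd : VdV n (fun _ => 0) φ = 0 := by simp [VdV]
  have hG : 0 ≤ gradInt n b φ := integral_nonneg fun x => by positivity
  have hM : 0 ≤ wInt n 0 2 φ := integral_nonneg fun x => by positivity
  have hN : 0 ≤ wInt n c (p+2) φ := integral_nonneg fun x => by positivity
  set G := gradInt n b φ with hGdef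
  set M := wInt n 0 2 φ with hMdef
  set N := wInt n c (p+2) φ with hNdef
  have hmin1 : min G (ω*M) ≤ G := min_le_left _ _
  have hmin2 : min G (ω*M) ≤ ω*M := min_le_right _ _
  simp only [Sfun, Kfun, hV0, hVd, ← hGdef, ← hMdef, ← hNdef]
  rcases le_or_gt 0 β with hβ | hβ
  · rw [abs_of_nonneg hβ, min_eq_right hβ,
      max_eq_left (by nlinarith : 2*α - (n:ℝ)*β ≤ 2*α + (2-b-(n:ℝ))*β)]
    have h1 : ((2-b)*β/2) * min G (ω*M) ≤ ((2-b)*β/2) * (ω*M) :=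
      mul_le_mul_of_nonneg_left hmin2 (by nlinarith)
    have hid : (2 * α + (2 - b - (n:ℝ)) * β) * (1 / 2 * G + 1 / 2 * 0 + ω / 2 * M - 1 / (p + 2) * N) -
        ((2 * α + (2 - b - (n:ℝ)) * β) / 2 * G + (2 * α - (n:ℝ) * β) / 2 * (0 + ω * M) - β / 2 * 0 -
          (α * (p + 2) - ((n:ℝ) + c) * β) / (p + 2) * N)
      - ((2 - b) * β / 2 * (min G (ω*M)) + (p * α - (2 - b + c) * β + (2 - b) * 0) / (p + 2) * N)
      = (2-b)*β/2*(ω*M) - (2-b)*β/2*(min G (ω*M)) := by ring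
    linarith
  · rw [abs_of_neg hβ, min_eq_left hβ.le,
      max_eq_right (by nlinarith : 2*α + (2-b-(n:ℝ))*β ≤ 2*α - (n:ℝ)*β)]
    have h1 : ((2-b)*(-β)/2) * min G (ω*M) ≤ ((2-b)*(-β)/2) * G :=
      mul_le_mul_of_nonneg_left hmin1 (by nlinarith)
    have hid : (2 * α - (n:ℝ) * β) * (1 / 2 * G + 1 / 2 * 0 + ω / 2 * M - 1 / (p + 2) * N) -
        ((2 * α + (2 - b - (n:ℝ)) * β) / 2 * G + (2 * α - (n:ℝ) * β) / 2 * (0 + ω * M) - β / 2 * 0 -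
          (α * (p + 2) - ((n:ℝ) + c) * β) / (p + 2) * N)
      - ((2 - b) * -β / 2 * (min G (ω*M)) + (p * α - (2 - b + c) * β + (2 - b) * β) / (p + 2) * N)
      = (2-b)*(-β)/2*G - (2-b)*(-β)/2*(min G (ω*M)) := by ring
    linarith
end

section
/- Let n ≥ 3, 2−n < b < 2, b−2 < c ≤ 0, ω > 0, and p > 0 with 2(2−b) < p_c ≤ (2−b)(p+2) where p_c := np − 2c. Let (α,β) ∈ ℝ² satisfy α > 0, β ≥ 0 and 2α − nβ ≥ 0, and let V : ℝⁿ → ℝ be differentiable with V ≥ 0, x·∇V(x) ≤ 0 and x·∇V(x) + (2−b)V(x) ≥ 0 for all x. Define J^{α,β}_{ω,V}(φ) := S_{ω,V}(φ) − K^{α,β}_{ω,V}(φ)/(2α + (2−b−n)β) and n^{α,β}_{ω,V} := inf{J^{α,β}_{ω,V}(φ) : φ ∈ W_b^{1,2}, φ ≠ 0, K^{α,β}_{ω,V}(φ) ≤ 0}. Then n^{α,β}_{ω,V} = m^{α,β}_{ω,V}, where m^{α,β}_{ω,V} := inf{S_{ω,V}(φ) : φ ∈ W_b^{1,2}, φ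 ≠ 0, K^{α,β}_{ω,V}(φ) = 0}. -/
open MeasureTheory Real Filter

set_option maxHeartbeats 1600000

section AuxiliaryLemmas

lemma const_of_deriv_ae_zero (g : ℝ → ℂ) (hg : Differentiable ℝ g)
    (h0 : ∀ᵐ s : ℝ, deriv g s = 0) : ∀ s t : ℝ, g s = g t := by
  intro s t
  have hint : IntervalIntegrable (deriv g) volume s t := by
    have h1 : (fun s : ℝ => (0:ℂ)) =ᵐ[volume] deriv g := h0.mono fun s hs => hs.symm
    constructor <;>
      exact (integrable_zero _ _ _).congr (ae_restrict_of_ae h1)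
  have h := intervalIntegral.integral_eq_sub_of_hasDerivAt
    (f := g) (f' := deriv g) (a := s) (b := t)
    (fun x _ => (hg x).hasDerivAt) hint
  have hz : (∫ y in s..t, deriv g y) = 0 := by
    rw [intervalIntegral.integral_congr_ae (g := fun _ => (0:ℂ))
      (h0.mono fun x hx _ => hx)]
    simp
  rw [hz] at h
  exact (sub_eq_zero.mp h.symm).symm

lemma ae_ae_line {n : ℕ} (φ : ESp n → ℂ) (e : ESp n)
    (h : ∀ᵐ x : ESp n, fderiv ℝ φ x = 0) :
    ∀ᵐ x : ESp n, ∀ᵐ s : ℝ, fderiv ℝ φ (x + s • e) = 0 := by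
  have hNmeas : MeasurableSet {x : ESp n | fderiv ℝ φ x ≠ 0} :=
    (measurable_fderiv ℝ φ) (measurableSet_singleton 0).compl
  have hN0 : volume {x : ESp n | fderiv ℝ φ x ≠ 0} = 0 := ae_iff.mp h
  have hFmeas : Measurable (fun q : ESp n × ℝ => q.1 + q.2 • e) :=
    measurable_fst.add (measurable_snd.smul_const e)
  set T : Set (ESp n × ℝ) := (fun q : ESp n × ℝ => q.1 + q.2 • e) ⁻¹' {x | fderiv ℝ φ x ≠ 0}
    with hT
  have hTmeas : MeasurableSet T := hFmeas hNmeas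
  have hT0 : ((volume : Measure (ESp n)).prod (volume : Measure ℝ)) T = 0 := by
    rw [Measure.prod_apply_symm hTmeas]
    have hsl : ∀ s : ℝ, (volume : Measure (ESp n)) ((fun x : ESp n => (x, s)) ⁻¹' T) = 0 := by
      intro s
      have hps : ((fun x : ESp n => (x, s)) ⁻¹' T)
          = (fun x : ESp n => x + s • e) ⁻¹' {x | fderiv ℝ φ x ≠ 0} := rfl
      rw [hps, (measurePreserving_add_right volume (s • e)).measure_preimage
        hNmeas.nullMeasurableSet]
      exact hN0
    simp [hsl]
  have hprod : ∀ᵐ q : ESp n × ℝ ∂((volume : Measure (ESp n)).prod (volume : Measure ℝ)),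
      fderiv ℝ φ (q.1 + q.2 • e) = 0 := by
    rw [ae_iff]
    exact hT0
  exact Measure.ae_ae_of_ae_prod hprod

lemma const_of_fderiv_ae_zero {n : ℕ} (φ : ESp n → ℂ) (hφ : Differentiable ℝ φ)
    (h : ∀ᵐ x : ESp n, fderiv ℝ φ x = 0) : ∀ x y : ESp n, φ x = φ y := by
  have hline : ∀ w : ESp n, ∀ᵐ x : ESp n, φ (x + w) = φ x := by
    intro w
    filter_upwards [ae_ae_line φ w h] with x hx
    have hgdiff : Differentiable ℝ (fun s : ℝ => φ (x + s • w)) := by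
      intro s
      exact (hφ _).comp s (((differentiable_id.smul_const w) s).const_add x)
    have hderiv : ∀ᵐ s : ℝ, deriv (fun s : ℝ => φ (x + s • w)) s = 0 := by
      filter_upwards [hx] with s hs
      have hcurve : HasDerivAt (fun s : ℝ => x + s • w) w s := by
        simpa using ((hasDerivAt_id s).smul_const w).const_add x
      have hD : HasDerivAt (fun s : ℝ => φ (x + s • w))
          ((fderiv ℝ φ (x + s • w)) w) s :=
        (hφ (x + s • w)).hasFDerivAt.comp_hasDerivAt s hcurve
      rw [hD.deriv, hs]
      simp
    have := const_of_deriv_ae_zero _ hgdiff hderiv 1 0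
    simpa using this
  obtain ⟨D, hDc, hDd⟩ := TopologicalSpace.exists_countable_dense (ESp n)
  have hae : ∀ᵐ x : ESp n, ∀ w ∈ D, φ (x + w) = φ x :=
    (ae_ball_iff hDc).2 fun w _ => hline w
  obtain ⟨x₀, hx₀⟩ := hae.exists
  have hcont : Continuous (fun w : ESp n => φ (x₀ + w)) :=
    hφ.continuous.comp (continuous_const.add continuous_id)
  have heq : (fun w : ESp n => φ (x₀ + w)) = fun _ => φ x₀ :=
    Continuous.ext_on hDd hcont continuous_const fun w hw => hx₀ w hw
  intro x y
  have hx := congrFun heq (x - x₀)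
  have hy := congrFun heq (y - x₀)
  simp only [add_sub_cancel] at hx hy
  rw [hx, hy]

lemma norm_cmul (l : ℝ) (hl : 0 ≤ l) (z : ℂ) : ‖(l:ℂ) * z‖ = l * ‖z‖ := by
  rw [norm_mul, Complex.norm_real, Real.norm_of_nonneg hl]

lemma wInt_scale (n : ℕ) (a q l : ℝ) (hl : 0 ≤ l) (φ : ESp n → ℂ) :
    wInt n a q (fun x => (l:ℂ) * φ x) = l ^ q * wInt n a q φ := by
  unfold wInt
  rw [← integral_const_mul]
  congr 1; funext x
  rw [norm_cmul l hl, Real.mul_rpow hl (norm_nonneg _)]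
  ring

lemma gradInt_scale (n : ℕ) (b l : ℝ) (hl : 0 ≤ l) (φ : ESp n → ℂ)
    (hd : Differentiable ℝ φ) :
    gradInt n b (fun x => (l:ℂ) * φ x) = l ^ 2 * gradInt n b φ := by
  unfold gradInt
  rw [← integral_const_mul]
  congr 1; funext x
  rw [fderiv_const_mul (hd x), norm_smul ((l:ℂ)) (fderiv ℝ φ x), Complex.norm_real,
    Real.norm_of_nonneg hl]
  ring

lemma weight_scale (n : ℕ) (l : ℝ) (hl : 0 ≤ l) (g : ESp n → ℝ) (φ : ESp n → ℂ) :
    (∫ x : ESp n, g x * ‖(l:ℂ) * φ x‖ ^ 2) = l ^ 2 * ∫ x : ESp n, g x * ‖φ x‖ ^ 2 := by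
  rw [← integral_const_mul]
  congr 1; funext x
  rw [norm_cmul l hl]; ring

lemma Vterm_scale (n : ℕ) (l : ℝ) (hl : 0 ≤ l) (V : ESp n → ℝ) (φ : ESp n → ℂ) :
    Vterm n V (fun x => (l:ℂ) * φ x) = l ^ 2 * Vterm n V φ :=
  weight_scale n l hl V φ

lemma VdV_scale (n : ℕ) (l : ℝ) (hl : 0 ≤ l) (V : ESp n → ℝ) (φ : ESp n → ℂ) :
    VdV n V (fun x => (l:ℂ) * φ x) = l ^ 2 * VdV n V φ :=
  weight_scale n l hl (fun x => fderiv ℝ V x x) φ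

lemma wInt_nonneg (n : ℕ) (a q : ℝ) (φ : ESp n → ℂ) : 0 ≤ wInt n a q φ :=
  integral_nonneg fun x =>
    mul_nonneg (Real.rpow_nonneg (norm_nonneg _) _) (Real.rpow_nonneg (norm_nonneg _) _)

lemma gradInt_nonneg (n : ℕ) (b : ℝ) (φ : ESp n → ℂ) : 0 ≤ gradInt n b φ :=
  integral_nonneg fun x =>
    mul_nonneg (Real.rpow_nonneg (norm_nonneg _) _) (sq_nonneg _)

lemma Vterm_nonneg (n : ℕ) (V : ESp n → ℝ) (hV : ∀ x, 0 ≤ V x) (φ : ESp n → ℂ) :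
    0 ≤ Vterm n V φ :=
  integral_nonneg fun x => mul_nonneg (hV x) (sq_nonneg _)

lemma VdV_nonpos (n : ℕ) (V : ESp n → ℝ) (hVx : ∀ x, fderiv ℝ V x x ≤ 0) (φ : ESp n → ℂ) :
    VdV n V φ ≤ 0 :=
  integral_nonpos fun x => mul_nonpos_of_nonpos_of_nonneg (hVx x) (sq_nonneg _)

lemma J_identity (n : ℕ) (b c p ω α β : ℝ) (V : ESp n → ℝ) (φ : ESp n → ℂ)
    (hκ : 2*α + (2-b-(n:ℝ))*β ≠ 0) (hp2 : p + 2 ≠ 0)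
    (hI2 : Integrable (fun x : ESp n => V x * ‖φ x‖ ^ 2))
    (hI3 : Integrable (fun x : ESp n => (fderiv ℝ V x x) * ‖φ x‖ ^ 2)) :
    Sfun n b c p ω V φ - Kfun n b c p ω α β V φ / (2*α + (2-b-(n:ℝ))*β)
      = (β/(2*(2*α + (2-b-(n:ℝ))*β)))
          * (∫ x : ESp n, (fderiv ℝ V x x + (2-b) * V x) * ‖φ x‖ ^ 2)
        + ((2-b)*β*ω/(2*(2*α + (2-b-(n:ℝ))*β))) * wInt n 0 2 φ
        + ((α*p + β*(b-2-c))/((2*α + (2-b-(n:ℝ))*β)*(p+2))) * wInt n c (p+2) φ := by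
  have hsplit : (∫ x : ESp n, (fderiv ℝ V x x + (2-b) * V x) * ‖φ x‖ ^ 2)
      = VdV n V φ + (2-b) * Vterm n V φ := by
    have h : (fun x : ESp n => (fderiv ℝ V x x + (2-b) * V x) * ‖φ x‖ ^ 2)
        = fun x => (fderiv ℝ V x x) * ‖φ x‖ ^ 2 + (2-b) * (V x * ‖φ x‖ ^ 2) := by
      funext x; ring
    rw [h, integral_add hI3 (hI2.const_mul _), integral_const_mul]
    rfl
  rw [hsplit]
  unfold Sfun Kfun
  field_simp
  ring

lemma kappa_pos (n : ℕ) (b α β : ℝ) (hb2 : b < 2) (hα : 0 < α) (hβ : 0 ≤ β)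
    (hαβ : 0 ≤ 2*α - (n:ℝ)*β) : 0 < 2*α + (2-b-(n:ℝ))*β := by
  rcases eq_or_lt_of_le hβ with hb0 | hb0
  · rw [← hb0]; ring_nf; linarith
  · have h2 : 0 < (2-b)*β := mul_pos (by linarith) hb0
    nlinarith [hαβ]

lemma theta_nonneg (n : ℕ) (b c p α β : ℝ) (hp : 0 < p) (hβ : 0 ≤ β)
    (hαβ : 0 ≤ 2*α - (n:ℝ)*β) (hpc1 : 2*(2-b) < (n:ℝ)*p - 2*c) :
    0 ≤ α*p + β*(b-2-c) := by
  nlinarith [mul_nonneg hαβ hp.le, mul_nonneg hβ (sub_pos.mpr hpc1).le]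

lemma W_nonneg (n : ℕ) (b : ℝ) (V : ESp n → ℝ)
    (hVI : ∀ x, 0 ≤ fderiv ℝ V x x + (2-b) * V x) (φ : ESp n → ℂ) :
    0 ≤ ∫ x : ESp n, (fderiv ℝ V x x + (2-b) * V x) * ‖φ x‖ ^ 2 :=
  integral_nonneg fun x => mul_nonneg (hVI x) (sq_nonneg _)

lemma J_nonneg (n : ℕ) (b c p ω α β : ℝ) (hb2 : b < 2) (hω : 0 < ω) (hp : 0 < p)
    (hpc1 : 2*(2-b) < (n:ℝ)*p - 2*c)
    (hα : 0 < α) (hβ : 0 ≤ β) (hαβ : 0 ≤ 2*α - (n:ℝ)*β)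
    (V : ESp n → ℝ) (hVI : ∀ x, 0 ≤ fderiv ℝ V x x + (2-b) * V x)
    (φ : ESp n → ℂ)
    (hI2 : Integrable (fun x : ESp n => V x * ‖φ x‖ ^ 2))
    (hI3 : Integrable (fun x : ESp n => (fderiv ℝ V x x) * ‖φ x‖ ^ 2)) :
    0 ≤ Sfun n b c p ω V φ - Kfun n b c p ω α β V φ / (2*α + (2-b-(n:ℝ))*β) := by
  have hκpos := kappa_pos n b α β hb2 hα hβ hαβ
  rw [J_identity n b c p ω α β V φ (ne_of_gt hκpos) (by linarith) hI2 hI3]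
  have h1 : 0 ≤ (β/(2*(2*α + (2-b-(n:ℝ))*β)))
      * (∫ x : ESp n, (fderiv ℝ V x x + (2-b) * V x) * ‖φ x‖ ^ 2) :=
    mul_nonneg (div_nonneg hβ (by linarith)) (W_nonneg n b V hVI φ)
  have h2 : 0 ≤ ((2-b)*β*ω/(2*(2*α + (2-b-(n:ℝ))*β))) * wInt n 0 2 φ :=
    mul_nonneg (div_nonneg (mul_nonneg (mul_nonneg (by linarith) hβ) hω.le)
      (by linarith)) (wInt_nonneg n 0 2 φ)
  have h3 : 0 ≤ ((α*p + β*(b-2-c))/((2*α + (2-b-(n:ℝ))*β)*(p+2))) * wInt n c (p+2) φ :=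
    mul_nonneg (div_nonneg (theta_nonneg n b c p α β hp hβ hαβ hpc1)
      (mul_nonneg hκpos.le (by linarith))) (wInt_nonneg n c (p+2) φ)
  linarith

lemma sInf_eq_sInf_aux {A B : Set ℝ} (hBA : B ⊆ A)
    (hAlow : ∀ s ∈ A, (0:ℝ) ≤ s)
    (hAB : ∀ s ∈ A, ∃ t ∈ B, t ≤ s) :
    sInf A = sInf B := by
  rcases Set.eq_empty_or_nonempty A with hAe | hAne
  · have hBe : B = ∅ := by
      rw [hAe] at hBA
      exact Set.subset_empty_iff.mp hBA
    rw [hAe, hBe]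
  · obtain ⟨s, hs⟩ := hAne
    obtain ⟨t, htB, _⟩ := hAB s hs
    have hBne : B.Nonempty := ⟨t, htB⟩
    have hAbdd : BddBelow A := ⟨0, fun x hx => hAlow x hx⟩
    have hBbdd : BddBelow B := ⟨0, fun x hx => hAlow x (hBA hx)⟩
    refine le_antisymm (csInf_le_csInf hAbdd hBne hBA) ?_
    refine le_csInf ⟨s, hs⟩ fun x hx => ?_
    obtain ⟨t', ht'B, ht'le⟩ := hAB x hx
    exact le_trans (csInf_le hBbdd ht'B) ht'le

end AuxiliaryLemmas

lemma key_construction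
    (n : ℕ) (hn : 3 ≤ n) (b c p ω α β : ℝ)
    (hb2 : b < 2) (hc2 : c ≤ 0)
    (hω : 0 < ω) (hp : 0 < p)
    (hpc1 : 2*(2-b) < (n:ℝ)*p - 2*c)
    (hα : 0 < α) (hβ : 0 ≤ β) (hαβ : 0 ≤ 2*α - (n:ℝ)*β)
    (V : ESp n → ℝ) (hVpos : ∀ x, 0 ≤ V x)
    (hVx : ∀ x, fderiv ℝ V x x ≤ 0)
    (hVI : ∀ x, 0 ≤ fderiv ℝ V x x + (2-b) * V x)
    (φ : ESp n → ℂ) (hmem : memW n b φ) (hne : φ ≠ 0)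
    (hI1 : Integrable (fun x : ESp n => ‖x‖ ^ c * ‖φ x‖ ^ (p+2)))
    (hI2 : Integrable (fun x : ESp n => V x * ‖φ x‖ ^ 2))
    (hI3 : Integrable (fun x : ESp n => (fderiv ℝ V x x) * ‖φ x‖ ^ 2))
    (hK : Kfun n b c p ω α β V φ ≤ 0) :
    ∃ ψ : ESp n → ℂ, memW n b ψ ∧ ψ ≠ 0 ∧
      Integrable (fun x : ESp n => ‖x‖ ^ c * ‖ψ x‖ ^ (p+2)) ∧
      Integrable (fun x : ESp n => V x * ‖ψ x‖ ^ 2) ∧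
      Integrable (fun x : ESp n => (fderiv ℝ V x x) * ‖ψ x‖ ^ 2) ∧
      Kfun n b c p ω α β V ψ = 0 ∧
      Sfun n b c p ω V ψ ≤ Sfun n b c p ω V φ
        - Kfun n b c p ω α β V φ / (2*α + (2-b-(n:ℝ))*β) := by
  obtain ⟨hdiff, hL2, hGint⟩ := hmem
  have hκpos := kappa_pos n b α β hb2 hα hβ hαβ
  have hp2 : (0:ℝ) < p + 2 := by linarith
  have hG0 : 0 ≤ gradInt n b φ := gradInt_nonneg n b φ
  have hL0 : 0 ≤ wInt n 0 2 φ := wInt_nonneg n 0 2 φ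
  have hN0 : 0 ≤ wInt n c (p+2) φ := wInt_nonneg n c (p+2) φ
  have hVt0 : 0 ≤ Vterm n V φ := Vterm_nonneg n V hVpos φ
  have hD0 : VdV n V φ ≤ 0 := VdV_nonpos n V hVx φ
  have hf0 : 0 < α*(p+2) - ((n:ℝ)+c)*β := by
    nlinarith [mul_pos hα hp, mul_nonneg (neg_nonneg.mpr hc2) hβ, hαβ]
  have hfpos : 0 < (α*(p+2) - ((n:ℝ)+c)*β)/(p+2) := div_pos hf0 hp2
  have hKeq : Kfun n b c p ω α β V φ
      = ((2*α + (2-b-(n:ℝ))*β)/2) * gradInt n b φ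
        + ((2*α - (n:ℝ)*β)/2) * (Vterm n V φ + ω * wInt n 0 2 φ)
        - (β/2) * VdV n V φ
        - ((α*(p+2) - ((n:ℝ)+c)*β)/(p+2)) * wInt n c (p+2) φ := rfl
  have h1 : 0 ≤ ((2*α + (2-b-(n:ℝ))*β)/2) * gradInt n b φ :=
    mul_nonneg (by linarith) hG0
  have h2 : 0 ≤ ((2*α - (n:ℝ)*β)/2) * (Vterm n V φ + ω * wInt n 0 2 φ) :=
    mul_nonneg (by linarith) (by nlinarith [mul_nonneg hω.le hL0])
  have h3 : (β/2) * VdV n V φ ≤ 0 :=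
    mul_nonpos_of_nonneg_of_nonpos (by linarith) hD0
  have hKquad : 0 ≤ Kfun n b c p ω α β V φ
      + ((α*(p+2) - ((n:ℝ)+c)*β)/(p+2)) * wInt n c (p+2) φ := by
    rw [hKeq]; linarith
  rcases eq_or_lt_of_le hN0 with hNz | hNpos
  · -- the nonlinear term vanishes : K(φ) = 0 already
    have hKz : Kfun n b c p ω α β V φ = 0 := by
      have hq := hKquad
      rw [← hNz, mul_zero, add_zero] at hq
      linarith
    exact ⟨φ, ⟨hdiff, hL2, hGint⟩, hne, hI1, hI2, hI3, hKz, by rw [hKz]; simp⟩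
  rcases eq_or_lt_of_le hKquad with hKqz | hKqpos
  · -- quadratic part vanishes: contradiction, φ would be a nonzero constant
    exfalso
    haveI hNontriv : Nontrivial (ESp n) := by
      have h0n : 0 < n := by omega
      refine ⟨⟨0, EuclideanSpace.single ⟨0, h0n⟩ 1, fun hcontra => ?_⟩⟩
      have h01 : ‖(0 : ESp n)‖ = ‖EuclideanSpace.single (⟨0, h0n⟩ : Fin n) (1:ℝ)‖ := by
        rw [hcontra]
      rw [norm_zero, EuclideanSpace.norm_single] at h01
      norm_num at h01
    have hGz : gradInt n b φ = 0 := by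
      have ht1 : ((2*α + (2-b-(n:ℝ))*β)/2) * gradInt n b φ = 0 := by
        rw [hKeq] at hKqz; linarith
      rcases mul_eq_zero.mp ht1 with h | h
      · exact absurd h (ne_of_gt (by linarith))
      · exact h
    have hae : ∀ᵐ x : ESp n, ‖x‖ ^ b * ‖fderiv ℝ φ x‖ ^ 2 = 0 := by
      have hnn : (0 : ESp n → ℝ) ≤ fun x => ‖x‖ ^ b * ‖fderiv ℝ φ x‖ ^ 2 := fun x =>
        mul_nonneg (Real.rpow_nonneg (norm_nonneg _) _) (sq_nonneg _)
      have h := (integral_eq_zero_iff_of_nonneg hnn hGint).mp hGz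
      filter_upwards [h] with x hx
      exact hx
    have hzero_ae : ∀ᵐ x : ESp n, fderiv ℝ φ x = 0 := by
      have hne0 : ∀ᵐ x : ESp n, x ≠ (0 : ESp n) := by
        rw [ae_iff]
        simpa using measure_singleton (0 : ESp n)
      filter_upwards [hae, hne0] with x hx1 hx2
      have hxb : 0 < ‖x‖ ^ b := Real.rpow_pos_of_pos (norm_pos_iff.mpr hx2) _
      have hsq : ‖fderiv ℝ φ x‖ ^ 2 = 0 := by
        rcases mul_eq_zero.mp hx1 with h | h
        · exact absurd h (ne_of_gt hxb)
        · exact h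
      simpa using (pow_eq_zero_iff (n := 2) (by norm_num)).mp hsq
    have hconst := const_of_fderiv_ae_zero φ hdiff hzero_ae
    obtain ⟨x₁, hx₁⟩ : ∃ x₁, φ x₁ ≠ 0 := by
      by_contra hno
      push_neg at hno
      exact hne (funext fun x => hno x)
    have hconst2 : (fun x : ESp n => ‖φ x‖ ^ (2:ℝ)) = fun _ => ‖φ x₁‖ ^ (2:ℝ) :=
      funext fun x => by rw [hconst x x₁]
    rw [hconst2] at hL2
    rcases integrable_const_iff.mp hL2 with h | h
    · exact (Real.rpow_pos_of_pos (norm_pos_iff.mpr hx₁) 2).ne' h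
    · rw [isFiniteMeasure_iff, measure_univ_of_isAddLeftInvariant] at h
      exact lt_irrefl _ h
  · -- main case: rescale φ so that K vanishes
    have hfN : 0 < ((α*(p+2) - ((n:ℝ)+c)*β)/(p+2)) * wInt n c (p+2) φ :=
      mul_pos hfpos hNpos
    have hr0 : 0 < (Kfun n b c p ω α β V φ
        + ((α*(p+2) - ((n:ℝ)+c)*β)/(p+2)) * wInt n c (p+2) φ)
        / (((α*(p+2) - ((n:ℝ)+c)*β)/(p+2)) * wInt n c (p+2) φ) := div_pos hKqpos hfN
    have hr1 : (Kfun n b c p ω α β V φ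
        + ((α*(p+2) - ((n:ℝ)+c)*β)/(p+2)) * wInt n c (p+2) φ)
        / (((α*(p+2) - ((n:ℝ)+c)*β)/(p+2)) * wInt n c (p+2) φ) ≤ 1 :=
      (div_le_one hfN).mpr (by linarith)
    set r : ℝ := (Kfun n b c p ω α β V φ
        + ((α*(p+2) - ((n:ℝ)+c)*β)/(p+2)) * wInt n c (p+2) φ)
        / (((α*(p+2) - ((n:ℝ)+c)*β)/(p+2)) * wInt n c (p+2) φ) with hrdef
    set l : ℝ := r ^ (1/p) with hldef
    clear_value l r
    have hl0 : 0 < l := by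
      rw [hldef]; exact Real.rpow_pos_of_pos hr0 _
    have hl1 : l ≤ 1 := by
      rw [hldef]; exact Real.rpow_le_one hr0.le hr1 (by positivity)
    have hlp : l ^ p = r := by
      rw [hldef, ← Real.rpow_mul hr0.le, one_div_mul_cancel hp.ne', Real.rpow_one]
    have hl2R : l ^ (2:ℝ) = l ^ 2 := by
      rw [show (2:ℝ) = ((2:ℕ):ℝ) by norm_num, Real.rpow_natCast]
    have hlp2 : l ^ (p+2) = l ^ p * l ^ 2 := by
      rw [Real.rpow_add hl0, hl2R]
    have hl2le : l ^ 2 ≤ 1 := pow_le_one₀ hl0.le hl1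
    have hlp2le : l ^ (p+2) ≤ 1 := Real.rpow_le_one hl0.le hl1 (by linarith)
    have e1 : gradInt n b (fun x => (l:ℂ) * φ x) = l^2 * gradInt n b φ :=
      gradInt_scale n b l hl0.le φ hdiff
    have e2 : Vterm n V (fun x => (l:ℂ) * φ x) = l^2 * Vterm n V φ :=
      Vterm_scale n l hl0.le V φ
    have e3 : wInt n 0 2 (fun x => (l:ℂ) * φ x) = l^2 * wInt n 0 2 φ := by
      rw [wInt_scale n 0 2 l hl0.le φ, hl2R]
    have e4 : VdV n V (fun x => (l:ℂ) * φ x) = l^2 * VdV n V φ :=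
      VdV_scale n l hl0.le V φ
    have e5 : wInt n c (p+2) (fun x => (l:ℂ) * φ x) = l^(p+2) * wInt n c (p+2) φ :=
      wInt_scale n c (p+2) l hl0.le φ
    have eW : (∫ x : ESp n, (fderiv ℝ V x x + (2-b) * V x) * ‖(l:ℂ) * φ x‖ ^ 2)
        = l^2 * ∫ x : ESp n, (fderiv ℝ V x x + (2-b) * V x) * ‖φ x‖ ^ 2 :=
      weight_scale n l hl0.le (fun x => fderiv ℝ V x x + (2-b) * V x) φ
    have hKQ : ((2*α + (2-b-(n:ℝ))*β)/2) * gradInt n b φ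
        + ((2*α - (n:ℝ)*β)/2) * (Vterm n V φ + ω * wInt n 0 2 φ)
        - (β/2) * VdV n V φ
        = Kfun n b c p ω α β V φ
          + ((α*(p+2) - ((n:ℝ)+c)*β)/(p+2)) * wInt n c (p+2) φ := by
      rw [hKeq]; ring
    have hrN : r * (((α*(p+2) - ((n:ℝ)+c)*β)/(p+2)) * wInt n c (p+2) φ)
        = Kfun n b c p ω α β V φ
          + ((α*(p+2) - ((n:ℝ)+c)*β)/(p+2)) * wInt n c (p+2) φ := by
      rw [hrdef]
      exact div_mul_cancel₀ _ (ne_of_gt hfN)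
    have hKscaled : Kfun n b c p ω α β V (fun x => (l:ℂ) * φ x) = 0 := by
      have hKeqψ : Kfun n b c p ω α β V (fun x => (l:ℂ) * φ x)
          = ((2*α + (2-b-(n:ℝ))*β)/2) * gradInt n b (fun x => (l:ℂ) * φ x)
            + ((2*α - (n:ℝ)*β)/2) * (Vterm n V (fun x => (l:ℂ) * φ x)
                + ω * wInt n 0 2 (fun x => (l:ℂ) * φ x))
            - (β/2) * VdV n V (fun x => (l:ℂ) * φ x)
            - ((α*(p+2) - ((n:ℝ)+c)*β)/(p+2)) * wInt n c (p+2) (fun x => (l:ℂ) * φ x) := rfl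
      rw [hKeqψ, e1, e2, e3, e4, e5, hlp2, hlp]
      linear_combination (l^2) * hKQ - (l^2) * hrN
    have hI2ψ : Integrable (fun x : ESp n => V x * ‖(l:ℂ) * φ x‖ ^ 2) := by
      have he : (fun x : ESp n => V x * ‖(l:ℂ) * φ x‖ ^ 2)
          = fun x => l ^ 2 * (V x * ‖φ x‖ ^ 2) := by
        funext x; rw [norm_cmul l hl0.le]; ring
      rw [he]; exact hI2.const_mul _
    have hI3ψ : Integrable (fun x : ESp n => (fderiv ℝ V x x) * ‖(l:ℂ) * φ x‖ ^ 2) := by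
      have he : (fun x : ESp n => (fderiv ℝ V x x) * ‖(l:ℂ) * φ x‖ ^ 2)
          = fun x => l ^ 2 * ((fderiv ℝ V x x) * ‖φ x‖ ^ 2) := by
        funext x; rw [norm_cmul l hl0.le]; ring
      rw [he]; exact hI3.const_mul _
    have hfinal : Sfun n b c p ω V (fun x => (l:ℂ) * φ x)
        ≤ Sfun n b c p ω V φ - Kfun n b c p ω α β V φ / (2*α + (2-b-(n:ℝ))*β) := by
      have hJψ := J_identity n b c p ω α β V (fun x => (l:ℂ) * φ x)
        (ne_of_gt hκpos) (by linarith) hI2ψ hI3ψ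
      have hJφ := J_identity n b c p ω α β V φ (ne_of_gt hκpos) (by linarith) hI2 hI3
      rw [hKscaled, zero_div, sub_zero] at hJψ
      beta_reduce at hJψ
      rw [hJψ, hJφ, eW, e3, e5]
      have hW0' := W_nonneg n b V hVI φ
      have c1 : 0 ≤ β/(2*(2*α + (2-b-(n:ℝ))*β)) := div_nonneg hβ (by linarith)
      have c2 : 0 ≤ (2-b)*β*ω/(2*(2*α + (2-b-(n:ℝ))*β)) :=
        div_nonneg (mul_nonneg (mul_nonneg (by linarith) hβ) hω.le) (by linarith)
      have c3 : 0 ≤ (α*p + β*(b-2-c))/((2*α + (2-b-(n:ℝ))*β)*(p+2)) :=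
        div_nonneg (theta_nonneg n b c p α β hp hβ hαβ hpc1)
          (mul_nonneg hκpos.le (by linarith))
      have t1 := mul_le_mul_of_nonneg_left (mul_le_of_le_one_left hW0' hl2le) c1
      have t2 := mul_le_mul_of_nonneg_left (mul_le_of_le_one_left hL0 hl2le) c2
      have t3 := mul_le_mul_of_nonneg_left (mul_le_of_le_one_left hN0 hlp2le) c3
      linarith
    refine ⟨fun x => (l:ℂ) * φ x, ⟨hdiff.const_mul _, ?_, ?_⟩, ?_, ?_, hI2ψ, hI3ψ,
      hKscaled, hfinal⟩
    · have he : (fun x : ESp n => ‖(l:ℂ) * φ x‖ ^ (2:ℝ))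
          = fun x => l ^ (2:ℝ) * ‖φ x‖ ^ (2:ℝ) := by
        funext x
        rw [norm_cmul l hl0.le, Real.mul_rpow hl0.le (norm_nonneg _)]
      rw [he]
      exact hL2.const_mul _
    · have he : (fun x : ESp n => ‖x‖ ^ b * ‖fderiv ℝ (fun y => (l:ℂ) * φ y) x‖ ^ 2)
          = fun x => l ^ 2 * (‖x‖ ^ b * ‖fderiv ℝ φ x‖ ^ 2) := by
        funext x
        rw [fderiv_const_mul (hdiff x), norm_smul ((l:ℂ)) (fderiv ℝ φ x),
          Complex.norm_real, Real.norm_of_nonneg hl0.le]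
        ring
      rw [he]
      exact hGint.const_mul _
    · intro hz
      apply hne
      funext x
      have hx := congrFun hz x
      simp only [Pi.zero_apply] at hx
      rcases mul_eq_zero.mp hx with h | h
      · exact absurd (Complex.ofReal_eq_zero.mp h) hl0.ne'
      · simpa using h
    · have he : (fun x : ESp n => ‖x‖ ^ c * ‖(l:ℂ) * φ x‖ ^ (p+2))
          = fun x => l ^ (p+2) * (‖x‖ ^ c * ‖φ x‖ ^ (p+2)) := by
        funext x
        rw [norm_cmul l hl0.le, Real.mul_rpow hl0.le (norm_nonneg _)]
        ring
      rw [he]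
      exact hI1.const_mul _

/-- `n^{α,β}_{ω,V} = m^{α,β}_{ω,V}`. -/
theorem nval_eq_mval
    (n : ℕ) (hn : 3 ≤ n) (b c p ω α β : ℝ)
    (hb1 : 2 - (n:ℝ) < b) (hb2 : b < 2)
    (hc1 : b - 2 < c) (hc2 : c ≤ 0)
    (hω : 0 < ω) (hp : 0 < p)
    (hpc1 : 2*(2-b) < (n:ℝ)*p - 2*c) (hpc2 : (n:ℝ)*p - 2*c ≤ (2-b)*(p+2))
    (hα : 0 < α) (hβ : 0 ≤ β) (hαβ : 0 ≤ 2*α - (n:ℝ)*β)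
    (V : ESp n → ℝ) (hVdiff : Differentiable ℝ V) (hVpos : ∀ x, 0 ≤ V x)
    (hVx : ∀ x, fderiv ℝ V x x ≤ 0)
    (hVI : ∀ x, 0 ≤ fderiv ℝ V x x + (2-b) * V x) :
    sInf {s : ℝ | ∃ φ : ESp n → ℂ, memW n b φ ∧ φ ≠ 0 ∧
        Integrable (fun x : ESp n => ‖x‖ ^ c * ‖φ x‖ ^ (p+2)) ∧
        Integrable (fun x : ESp n => V x * ‖φ x‖ ^ 2) ∧
        Integrable (fun x : ESp n => (fderiv ℝ V x x) * ‖φ x‖ ^ 2) ∧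
        Kfun n b c p ω α β V φ ≤ 0 ∧
        s = Sfun n b c p ω V φ
              - Kfun n b c p ω α β V φ / (2*α + (2-b-(n:ℝ))*β)}
      = mvalV n b c p ω α β V := by
  unfold mvalV
  apply sInf_eq_sInf_aux
  · rintro s ⟨ψ, hmem, hne, i1, i2, i3, hK0, hs⟩
    exact ⟨ψ, hmem, hne, i1, i2, i3, le_of_eq hK0, by rw [hs, hK0, zero_div, sub_zero]⟩
  · rintro s ⟨ψ, hmem, hne, i1, i2, i3, hKle, hs⟩
    rw [hs]
    exact J_nonneg n b c p ω α β hb2 hω hp hpc1 hα hβ hαβ V hVI ψ i2 i3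
  · rintro s ⟨φ, hmem, hne, i1, i2, i3, hKle, hs⟩
    obtain ⟨ψ, hmemψ, hneψ, j1, j2, j3, hK0, hle⟩ :=
      key_construction n hn b c p ω α β hb2 hc2 hω hp hpc1 hα hβ hαβ V hVpos hVx hVI
        φ hmem hne i1 i2 i3 hKle
    exact ⟨Sfun n b c p ω V ψ, ⟨ψ, hmemψ, hneψ, j1, j2, j3, hK0, rfl⟩, by rw [hs]; exact hle⟩
end

section
/- Let n ≥ 1, b < 2, c ≥ b−2, and p > 0 with 2(2−b) < p_c ≤ (2−b)(p+2) where p_c := np − 2c. Let V : ℝⁿ → ℝ be differentiable with x·∇V(x) + (2−b)V(x) ≥ 0 for all x, and let (α,β) ∈ ℝ² satisfy α > 0, β ≥ 0 and 2α − nβ ≥ 0. Set ω₁ := −½ inf_{x∈ℝⁿ}[(2−b)V(x) + x·∇V(x)] and, for ω > 0, L_{ω,V}(φ) := ∫_{ℝⁿ}(|x|^b|∇φ|² + V|φ|²)dx + ω‖φ‖₂². If ω ≥ ω₁ and φ ∈ W_b^{1,2} satisfies K^{α,β}_{ω,V}(φ) ≥ 0 (with all integrals finite), then 2·S_{ω,V}(φ)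 ≤ L_{ω,V}(φ) ≤ ((2α(p+2) − 2(n+c)β)/(αp − (2−b+c)β))·S_{ω,V}(φ). -/
open MeasureTheory Real Filter

/-- comparison between `S_{ω,V}(φ)` and `L_{ω,V}(φ)` when `K^{α,β}_{ω,V}(φ) ≥ 0`. -/
theorem S_L_comparison
    (n : ℕ) (hn : 1 ≤ n) (b c p ω α β : ℝ)
    (hb : b < 2) (hc : b - 2 ≤ c) (hp : 0 < p)
    (hpc1 : 2*(2-b) < (n:ℝ)*p - 2*c) (hpc2 : (n:ℝ)*p - 2*c ≤ (2-b)*(p+2))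
    (V : ESp n → ℝ) (hVdiff : Differentiable ℝ V)
    (hVI : ∀ x, 0 ≤ fderiv ℝ V x x + (2-b) * V x)
    (hα : 0 < α) (hβ : 0 ≤ β) (hαβ : 0 ≤ 2*α - (n:ℝ)*β)
    (hω : 0 < ω)
    (hωω1 : ∀ x, -((2-b) * V x + fderiv ℝ V x x)/2 ≤ ω)
    (φ : ESp n → ℂ) (hφW : memW n b φ)
    (hφnl : Integrable (fun x : ESp n => ‖x‖ ^ c * ‖φ x‖ ^ (p+2)))
    (hφV : Integrable (fun x : ESp n => V x * ‖φ x‖ ^ 2))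
    (hφVx : Integrable (fun x : ESp n => (fderiv ℝ V x x) * ‖φ x‖ ^ 2))
    (hK : 0 ≤ Kfun n b c p ω α β V φ) :
    2 * Sfun n b c p ω V φ ≤ gradInt n b φ + Vterm n V φ + ω * wInt n 0 2 φ ∧
    gradInt n b φ + Vterm n V φ + ω * wInt n 0 2 φ ≤
      ((2*α*(p+2) - 2*((n:ℝ)+c)*β)/(α*p - (2-b+c)*β)) * Sfun n b c p ω V φ := by
  have hp2 : (0:ℝ) < p + 2 := by linarith
  have hNn : 0 ≤ wInt n c (p+2) φ :=
    integral_nonneg fun x => mul_nonneg (Real.rpow_nonneg (norm_nonneg _) _)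
      (Real.rpow_nonneg (norm_nonneg _) _)
  have hMn : 0 ≤ wInt n 0 2 φ :=
    integral_nonneg fun x => mul_nonneg (Real.rpow_nonneg (norm_nonneg _) _)
      (Real.rpow_nonneg (norm_nonneg _) _)
  have hE : 0 ≤ (2-b) * Vterm n V φ + VdV n V φ := by
    have h := integral_nonneg (μ := (volume : Measure (ESp n)))
      (f := fun x => (2-b) * (V x * ‖φ x‖^2) + fderiv ℝ V x x * ‖φ x‖^2)
      (fun x => by
        show (0:ℝ) ≤ (2-b) * (V x * ‖φ x‖^2) + fderiv ℝ V x x * ‖φ x‖^2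
        nlinarith [mul_nonneg (hVI x) (sq_nonneg ‖φ x‖)])
    rw [integral_add (hφV.const_mul _) hφVx, integral_const_mul] at h
    simpa [Vterm, VdV] using h
  have hden : 0 < α*p - (2-b+c)*β := by
    rcases eq_or_lt_of_le hβ with hβ0 | hβ0
    · rw [← hβ0]; nlinarith [mul_pos hα hp]
    · nlinarith [mul_pos hβ0 (sub_pos.2 hpc1), mul_nonneg hαβ hp.le]
  constructor
  · have h2 : 2 * Sfun n b c p ω V φ =
        (gradInt n b φ + Vterm n V φ + ω * wInt n 0 2 φ) - (2/(p+2)) * wInt n c (p+2) φ := by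
      simp only [Sfun]; ring
    have h3 : 0 ≤ (2/(p+2)) * wInt n c (p+2) φ := mul_nonneg (by positivity) hNn
    linarith
  · rw [div_mul_eq_mul_div, le_div_iff₀ hden]
    have key : (2*α*(p+2) - 2*((n:ℝ)+c)*β) * Sfun n b c p ω V φ
        - (gradInt n b φ + Vterm n V φ + ω * wInt n 0 2 φ) * (α*p - (2-b+c)*β)
        = 2 * Kfun n b c p ω α β V φ
          + β * ((2-b) * Vterm n V φ + VdV n V φ)
          + (2-b) * β * ω * wInt n 0 2 φ := by
      simp only [Sfun, Kfun]; field_simp; ring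
    have h2 : 0 ≤ β * ((2-b) * Vterm n V φ + VdV n V φ) := mul_nonneg hβ hE
    have h3 : 0 ≤ (2-b) * β * ω * wInt n 0 2 φ :=
      mul_nonneg (mul_nonneg (mul_nonneg (by linarith) hβ) hω.le) hMn
    linarith
end

section
/- Let n ≥ 3, 2−n < b ≤ 0, c ≥ b−2 and p > 0 with 2(2−b) < p_c < (2−b)(p+2), where p_c := np − 2c, and set σ := ((2−b)(p+2) − p_c)/(p_c − 4 + 2b). Let V : ℝⁿ → ℝ be differentiable with V ≥ 0 and x·∇V(x) + (2−b)V(x) ≥ 0 for all x. Let Q ∈ W_b^{1,2}, Q ≠ 0, satisfy the Pohozaev identities ‖∇Q‖²_{b,2} = (p_c/((2−b)(p+2)))·‖Q‖^{p+2}_{c,p+2} and ‖Q‖₂² = (((2−b)(p+2) − p_c)/p_c)·‖∇Q‖²_{b,2}. If u ∈ W_b^{1,2}, u ≠ 0, with ∫V|u|²dx < ∞ satisfies E_{b,V}(u)·M(u)^σ < E_b(Q)·M(Q)^σ and ‖u‖_{Ḣ¹_{b,V}}·‖u‖₂^σ > ‖∇Q‖_{b,2}·‖Q‖₂^σ, then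 P(u) ≤ −(p_c/(2(2−b)))·(E_b(Q)·M(Q)^σ·M(u)^{−σ} − E_{b,V}(u)) < 0. -/
open MeasureTheory Real Filter

/-- Purely algebraic core of the virial-negativity argument. -/
lemma key_alg (d q pc Gu Vt Nu Du GQ NQ Eu EQ Pu su sQ : ℝ)
    (hd : 0 < d) (hq : 0 < q) (hpc : 2*d < pc)
    (hPu : Pu = Gu - (1/d)*Du - (pc/(d*q))*Nu)
    (hEu : Eu = (1/2)*Gu + (1/2)*Vt - (1/q)*Nu)
    (hEQ : EQ = (1/2)*GQ - (1/q)*NQ)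
    (hNQ : d*q*GQ = pc*NQ)
    (hDle : -Du ≤ d*Vt)
    (hsu : 0 < su) (hsQ : 0 ≤ sQ)
    (hE : Eu*su < EQ*sQ)
    (hX : GQ*sQ < (Gu+Vt)*su) :
    Pu ≤ -(pc/(2*d))*(EQ*sQ*su⁻¹ - Eu) ∧ Pu < 0 := by
  have hd' : d ≠ 0 := hd.ne'
  have hq' : q ≠ 0 := hq.ne'
  have hsu' : su ≠ 0 := hsu.ne'
  have hpc0 : 0 < pc := by linarith
  have e1 : d*q*Pu = d*q*Gu - q*Du - pc*Nu := by
    rw [hPu]; field_simp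
  have e2 : 2*q*Eu = q*Gu + q*Vt - 2*Nu := by
    rw [hEu]; field_simp
  have e3 : 2*q*EQ = q*GQ - 2*NQ := by
    rw [hEQ]; field_simp
  have hF : 2*pc*q*EQ = (pc - 2*d)*q*GQ := by
    linear_combination pc*e3 + 2*hNQ
  have e1s : d*q*Pu*su = d*q*Gu*su - q*Du*su - pc*Nu*su := by
    linear_combination su*e1
  have e2p : pc*(2*q*Eu*su) = pc*(q*Gu*su + q*Vt*su - 2*Nu*su) := by
    linear_combination pc*su*e2
  have m1 : q*(-Du*su) ≤ q*(d*Vt*su) :=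
    mul_le_mul_of_nonneg_left (mul_le_mul_of_nonneg_right hDle hsu.le) hq.le
  have m4 : (pc - 2*d)*q*(GQ*sQ) ≤ (pc - 2*d)*q*((Gu+Vt)*su) :=
    mul_le_mul_of_nonneg_left hX.le (by nlinarith)
  have m5 : (pc*q)*(Eu*su) ≤ (pc*q)*(EQ*sQ) :=
    mul_le_mul_of_nonneg_left hE.le (by positivity)
  have hFs : 2*pc*q*EQ*sQ = (pc - 2*d)*q*GQ*sQ := by
    linear_combination sQ*hF
  have s3 : 2*d*q*(Pu*su) ≤ -(pc*q)*(EQ*sQ - Eu*su) := by linarith [e1s, e2p, m1, m4, m5, hFs]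
  have goal1 : Pu ≤ -(pc/(2*d))*(EQ*sQ*su⁻¹ - Eu) := by
    apply (mul_le_mul_iff_of_pos_right hsu).mp
    have hCsu : (-(pc/(2*d))*(EQ*sQ*su⁻¹ - Eu))*su = (-(pc*(EQ*sQ - Eu*su)))/(2*d) := by
      field_simp
    rw [hCsu, le_div_iff₀ (by linarith : (0:ℝ) < 2*d)]
    apply (mul_le_mul_iff_of_pos_right hq).mp
    linarith [s3]
  refine ⟨goal1, ?_⟩
  have hEd : Eu < EQ*sQ*su⁻¹ := by
    have h := (lt_div_iff₀ hsu).mpr hE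
    rwa [div_eq_mul_inv] at h
  have hκ : 0 < pc/(2*d) := by positivity
  have hpos : 0 < pc/(2*d) * (EQ*sQ*su⁻¹ - Eu) := mul_pos hκ (by linarith)
  linarith

/-- negativity of the virial functional above the ground-state threshold. -/
theorem virial_negative_above_threshold
    (n : ℕ) (hn : 3 ≤ n) (b c p σ : ℝ)
    (hb1 : 2 - (n:ℝ) < b) (hb2 : b ≤ 0) (hc : b - 2 ≤ c) (hp : 0 < p)
    (hpc1 : 2*(2-b) < (n:ℝ)*p - 2*c) (hpc2 : (n:ℝ)*p - 2*c < (2-b)*(p+2))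
    (hσ : σ = ((2-b)*(p+2) - ((n:ℝ)*p - 2*c))/(((n:ℝ)*p - 2*c) - 4 + 2*b))
    (V : ESp n → ℝ) (hVdiff : Differentiable ℝ V) (hVpos : ∀ x, 0 ≤ V x)
    (hVI : ∀ x, 0 ≤ fderiv ℝ V x x + (2-b) * V x)
    (Q : ESp n → ℂ) (hQW : memW n b Q) (hQ0 : Q ≠ 0)
    (hQnl : Integrable (fun x : ESp n => ‖x‖ ^ c * ‖Q x‖ ^ (p+2)))
    (hPoh1 : gradInt n b Q =
      (((n:ℝ)*p - 2*c)/((2-b)*(p+2))) * wInt n c (p+2) Q)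
    (hPoh2 : wInt n 0 2 Q =
      (((2-b)*(p+2) - ((n:ℝ)*p - 2*c))/((n:ℝ)*p - 2*c)) * gradInt n b Q)
    (u : ESp n → ℂ) (huW : memW n b u) (hu0 : u ≠ 0)
    (hunl : Integrable (fun x : ESp n => ‖x‖ ^ c * ‖u x‖ ^ (p+2)))
    (huV : Integrable (fun x : ESp n => V x * ‖u x‖ ^ 2))
    (huVx : Integrable (fun x : ESp n => (fderiv ℝ V x x) * ‖u x‖ ^ 2))
    (hE : Ebv n b c p V u * (wInt n 0 2 u) ^ σ <
      Ebv n b c p (fun _ => 0) Q * (wInt n 0 2 Q) ^ σ)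
    (hX : (gradInt n b u + Vterm n V u) ^ ((1:ℝ)/2) * (wInt n 0 2 u) ^ (σ/2) >
      (gradInt n b Q) ^ ((1:ℝ)/2) * (wInt n 0 2 Q) ^ (σ/2)) :
    Pfun n b c p V u ≤
      -(((n:ℝ)*p - 2*c)/(2*(2-b))) *
        (Ebv n b c p (fun _ => 0) Q * (wInt n 0 2 Q) ^ σ * (wInt n 0 2 u) ^ (-σ)
          - Ebv n b c p V u) ∧
    Pfun n b c p V u < 0 := by
  have hd : (0:ℝ) < 2 - b := by linarith
  have hq : (0:ℝ) < p + 2 := by linarith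
  have hσpos : 0 < σ := by
    rw [hσ]; apply div_pos <;> linarith
  -- nonnegativity of the various integrals
  have hGu0 : 0 ≤ gradInt n b u :=
    integral_nonneg fun x => mul_nonneg (Real.rpow_nonneg (norm_nonneg _) _) (by positivity)
  have hVt0 : 0 ≤ Vterm n V u :=
    integral_nonneg fun x => mul_nonneg (hVpos x) (by positivity)
  have hGQ0 : 0 ≤ gradInt n b Q :=
    integral_nonneg fun x => mul_nonneg (Real.rpow_nonneg (norm_nonneg _) _) (by positivity)
  have hMQ0 : 0 ≤ wInt n 0 2 Q :=
    integral_nonneg fun x => mul_nonneg (Real.rpow_nonneg (norm_nonneg _) _)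
      (Real.rpow_nonneg (norm_nonneg _) _)
  -- positivity of the mass of u
  have hMu : 0 < wInt n 0 2 u := by
    have heq : wInt n 0 2 u = ∫ x : ESp n, ‖u x‖ ^ (2:ℝ) := by
      unfold wInt; simp [Real.rpow_zero]
    rw [heq]
    rw [integral_pos_iff_support_of_nonneg
      (fun x => Real.rpow_nonneg (norm_nonneg _) _) huW.2.1]
    obtain ⟨x₀, hx₀⟩ := Function.ne_iff.mp hu0
    refine lt_of_lt_of_le
      (IsOpen.measure_pos volume
        (IsOpen.preimage huW.1.continuous isOpen_compl_singleton) ⟨x₀, hx₀⟩)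
      (measure_mono ?_)
    intro x hx
    have hx' : u x ≠ 0 := hx
    exact (Real.rpow_pos_of_pos (norm_pos_iff.mpr hx') 2).ne'
  -- the potential inequality, integrated
  have hDle : -(VdV n V u) ≤ (2-b)*(Vterm n V u) := by
    have hsum : VdV n V u + (2-b)*(Vterm n V u)
        = ∫ x : ESp n, ((fderiv ℝ V x x)*‖u x‖^2 + (2-b)*(V x*‖u x‖^2)) := by
      rw [integral_add huVx (huV.const_mul _), MeasureTheory.integral_const_mul, VdV, Vterm]
    have hnn : 0 ≤ VdV n V u + (2-b)*(Vterm n V u) := by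
      rw [hsum]
      apply integral_nonneg
      intro x
      simp only [Pi.zero_apply]
      nlinarith [mul_nonneg (hVI x) (sq_nonneg ‖u x‖)]
    linarith
  -- squaring the kinetic-mass inequality
  have hX' : gradInt n b Q * (wInt n 0 2 Q) ^ σ
      < (gradInt n b u + Vterm n V u) * (wInt n 0 2 u) ^ σ := by
    set A := (gradInt n b u + Vterm n V u) ^ ((1:ℝ)/2) * (wInt n 0 2 u) ^ (σ/2) with hA
    set B := (gradInt n b Q) ^ ((1:ℝ)/2) * (wInt n 0 2 Q) ^ (σ/2) with hB
    have hB0 : 0 ≤ B :=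
      mul_nonneg (Real.rpow_nonneg hGQ0 _) (Real.rpow_nonneg hMQ0 _)
    have hH0 : 0 ≤ gradInt n b u + Vterm n V u := add_nonneg hGu0 hVt0
    have hHpos : 0 < gradInt n b u + Vterm n V u := by
      rcases hH0.lt_or_eq with h | h
      · exact h
      · exfalso
        have hz : A = 0 := by
          rw [hA, ← h, Real.zero_rpow (by norm_num : (1:ℝ)/2 ≠ 0), zero_mul]
        rw [hz] at hX
        exact absurd hX (not_lt.mpr hB0)
    have eA : A * A = (gradInt n b u + Vterm n V u) * (wInt n 0 2 u) ^ σ := by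
      rw [hA, mul_mul_mul_comm, ← Real.rpow_add hHpos, ← Real.rpow_add hMu,
        show (1:ℝ)/2 + 1/2 = 1 by norm_num, show σ/2 + σ/2 = σ by ring, Real.rpow_one]
    have eB : B * B = gradInt n b Q * (wInt n 0 2 Q) ^ σ := by
      rw [hB, mul_mul_mul_comm,
        ← Real.rpow_add' hGQ0 (by norm_num : (1:ℝ)/2 + 1/2 ≠ 0),
        ← Real.rpow_add' hMQ0 (ne_of_gt (show (0:ℝ) < σ/2 + σ/2 by linarith)),
        show (1:ℝ)/2 + 1/2 = 1 by norm_num, show σ/2 + σ/2 = σ by ring, Real.rpow_one]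
    rw [← eA, ← eB]
    exact mul_self_lt_mul_self hB0 hX
  -- Pohozaev identity, cleared of denominators
  have hNQ : (2-b)*(p+2)*(gradInt n b Q) = ((n:ℝ)*p - 2*c)*(wInt n c (p+2) Q) := by
    rw [hPoh1]; field_simp
  -- energy of Q with zero potential
  have hV0 : Vterm n (fun _ : ESp n => (0:ℝ)) Q = 0 := by simp [Vterm]
  have hEQ : Ebv n b c p (fun _ => 0) Q
      = (1/2)*(gradInt n b Q) - (1/(p+2))*(wInt n c (p+2) Q) := by
    simp only [Ebv, hV0]; ring
  rw [Real.rpow_neg hMu.le]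
  exact key_alg (2-b) (p+2) ((n:ℝ)*p - 2*c) (gradInt n b u) (Vterm n V u)
    (wInt n c (p+2) u) (VdV n V u) (gradInt n b Q) (wInt n c (p+2) Q)
    (Ebv n b c p V u) (Ebv n b c p (fun _ => 0) Q) (Pfun n b c p V u)
    ((wInt n 0 2 u) ^ σ) ((wInt n 0 2 Q) ^ σ)
    hd hq hpc1 rfl rfl hEQ hNQ hDle
    (Real.rpow_pos_of_pos hMu σ) (Real.rpow_nonneg hMQ0 σ) hE hX'
end

section
/- Let n ≥ 3, 2−n < b < 2, b−2 < c ≤ 0 and p > 0 with 2(2−b) < p_c < (2−b)(p+2), where p_c := np − 2c, and set σ := ((2−b)(p+2) − p_c)/(p_c − 4 + 2b). Let V : ℝⁿ → ℝ satisfy V ≥ 0 and let Q ∈ W_b^{1,2}, Q ≠ 0, satisfy the Pohozaev identities ‖∇Q‖²_{b,2} = (p_c/((2−b)(p+2)))·‖Q‖^{p+2}_{c,p+2} and ‖Q‖₂² = (((2−b)(p+2) − p_c)/p_c)·‖∇Q‖²_{b,2}, and set S_{1,0}(Q) := ½‖∇Q‖²_{b,2} + ½‖Q‖₂² − (1/(p+2))‖Q‖^{p+2}_{c,p+2}.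 Then for every u₀ ∈ W_b^{1,2}, u₀ ≠ 0 with ∫V|u₀|²dx < ∞, the inequality E_{b,V}(u₀)·M(u₀)^σ < E_b(Q)·M(Q)^σ holds if and only if there exists ω > 0 such that S_{ω,V}(u₀) < ω^{((2−b)(p+2) − p_c)/((2−b)p)} · S_{1,0}(Q). -/
open MeasureTheory Real Filter

lemma mass_pos_aux (n : ℕ) (f : ESp n → ℂ) (hc : Continuous f)
    (hInt : Integrable (fun x : ESp n => ‖f x‖ ^ (2:ℝ)))
    (hf : f ≠ 0) : 0 < wInt n 0 2 f := by
  have hrw : wInt n 0 2 f = ∫ x : ESp n, ‖f x‖ ^ (2:ℝ) := by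
    unfold wInt
    congr 1
    funext x
    rw [Real.rpow_zero, one_mul]
  rw [hrw]
  rw [integral_pos_iff_support_of_nonneg (fun x => by positivity) hInt]
  obtain ⟨x₀, hx₀⟩ : ∃ x, f x ≠ 0 := by
    by_contra h
    push_neg at h
    exact hf (funext h)
  have hg : Continuous fun x : ESp n => ‖f x‖ ^ (2:ℝ) :=
    hc.norm.rpow_const (fun x => Or.inr (by norm_num))
  have hopen : IsOpen {x : ESp n | 0 < ‖f x‖ ^ (2:ℝ)} :=
    isOpen_lt continuous_const hg
  have hx₀' : x₀ ∈ {x : ESp n | 0 < ‖f x‖ ^ (2:ℝ)} :=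
    Real.rpow_pos_of_pos (norm_pos_iff.mpr hx₀) _
  refine lt_of_lt_of_le (hopen.measure_pos volume ⟨x₀, hx₀'⟩) (measure_mono ?_)
  intro x hx
  exact ne_of_gt hx

set_option maxHeartbeats 1000000 in
/-- equivalence between the energy–mass threshold condition and an
action bound `S_{ω,V}(u₀) < ω^{((2−b)(p+2)−p_c)/((2−b)p)}·S_{1,0}(Q)` for some `ω > 0`. -/
theorem energy_threshold_iff_action_bound
    (n : ℕ) (hn : 3 ≤ n) (b c p σ : ℝ)
    (hb1 : 2 - (n:ℝ) < b) (hb2 : b < 2)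
    (hc1 : b - 2 < c) (hc2 : c ≤ 0) (hp : 0 < p)
    (hpc1 : 2*(2-b) < (n:ℝ)*p - 2*c) (hpc2 : (n:ℝ)*p - 2*c < (2-b)*(p+2))
    (hσ : σ = ((2-b)*(p+2) - ((n:ℝ)*p - 2*c))/(((n:ℝ)*p - 2*c) - 4 + 2*b))
    (V : ESp n → ℝ) (hVpos : ∀ x, 0 ≤ V x)
    (Q : ESp n → ℂ) (hQW : memW n b Q) (hQ0 : Q ≠ 0)
    (hQnl : Integrable (fun x : ESp n => ‖x‖ ^ c * ‖Q x‖ ^ (p+2)))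
    (hPoh1 : gradInt n b Q =
      (((n:ℝ)*p - 2*c)/((2-b)*(p+2))) * wInt n c (p+2) Q)
    (hPoh2 : wInt n 0 2 Q =
      (((2-b)*(p+2) - ((n:ℝ)*p - 2*c))/((n:ℝ)*p - 2*c)) * gradInt n b Q)
    (u₀ : ESp n → ℂ) (huW : memW n b u₀) (hu0 : u₀ ≠ 0)
    (huV : Integrable (fun x : ESp n => V x * ‖u₀ x‖ ^ 2)) :
    (Ebv n b c p V u₀ * (wInt n 0 2 u₀) ^ σ <
        Ebv n b c p (fun _ => 0) Q * (wInt n 0 2 Q) ^ σ) ↔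
      (∃ ω : ℝ, 0 < ω ∧
        Sfun n b c p ω V u₀ <
          ω ^ (((2-b)*(p+2) - ((n:ℝ)*p - 2*c))/((2-b)*p)) *
            ((1/2) * gradInt n b Q + (1/2) * wInt n 0 2 Q
              - (1/(p+2)) * wInt n c (p+2) Q)) := by
  have hMQpos : 0 < wInt n 0 2 Q := mass_pos_aux n Q hQW.1.continuous hQW.2.1 hQ0
  have hMupos : 0 < wInt n 0 2 u₀ := mass_pos_aux n u₀ huW.1.continuous huW.2.1 hu0
  set G := gradInt n b Q with hGdef
  set MQ := wInt n 0 2 Q with hMQdef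
  set NQ := wInt n c (p+2) Q with hNQdef
  set Mu := wInt n 0 2 u₀ with hMudef
  set E := Ebv n b c p V u₀ with hEdef
  set EQ := Ebv n b c p (fun _ => 0) Q with hEQdef
  set S := (1/2) * G + (1/2) * MQ - (1/(p+2)) * NQ with hSdef
  set θ := ((2-b)*(p+2) - ((n:ℝ)*p - 2*c))/((2-b)*p) with hθdef
  set k := (n:ℝ)*p - 2*c with hkdef
  set A := (2-b)*(p+2) with hAdef
  clear_value G MQ NQ Mu E EQ S θ k A
  -- basic positivity
  have h2b : (0:ℝ) < 2 - b := by linarith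
  have hp2 : (0:ℝ) < p + 2 := by linarith
  have hApos : 0 < A := by rw [hAdef]; positivity
  have hkpos : 0 < k := lt_trans (by positivity) hpc1
  have hdp : (0:ℝ) < (2-b)*p := by positivity
  have hθ0 : 0 < θ := by
    rw [hθdef]
    exact div_pos (by linarith) hdp
  have hθ1 : θ < 1 := by
    rw [hθdef, div_lt_one hdp]
    have : A - (2-b)*p = 2*(2-b) := by rw [hAdef]; ring
    linarith
  have h1θ : (0:ℝ) < 1 - θ := by linarith
  -- algebraic consequences of the Pohozaev identities
  have hMQN : MQ = ((A - k)/A) * NQ := by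
    rw [hPoh2, hPoh1]
    field_simp
  have hNQpos : 0 < NQ := by
    have hcpos : 0 < (A - k)/A := div_pos (by linarith) hApos
    have h := hMQpos
    rw [hMQN] at h
    nlinarith [h, hcpos]
  have hSval : S = (p/(2*(p+2))) * NQ := by
    rw [hSdef, hPoh1, hMQN, hAdef]
    field_simp
    ring
  have hSpos : 0 < S := by
    rw [hSval]
    exact mul_pos (by positivity) hNQpos
  have hMhalf : 2*(θ*S) = MQ := by
    rw [hθdef, hSval, hMQN, hAdef]
    field_simp
  have hV0 : Vterm n (fun _ : ESp n => (0:ℝ)) Q = 0 := by simp [Vterm]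
  have hEQ1 : EQ = (1/2)*G - (1/(p+2))*NQ := by
    rw [hEQdef]
    unfold Ebv
    rw [hV0, ← hGdef, ← hNQdef]
    ring
  have hEQval : EQ = (1-θ)*S := by
    rw [hEQ1, hPoh1, hθdef, hSval, hAdef]
    field_simp
    ring
  have hden : k - 4 + 2*b ≠ 0 := by
    intro h0
    linarith
  have hσθ : σ * (1 - θ) = θ := by
    rw [hσ, hθdef, hAdef]
    field_simp
    ring
  -- the critical frequency
  set ωs := (MQ/Mu) ^ ((1:ℝ)/(1-θ)) with hωsdef
  clear_value ωs
  have hratpos : 0 < MQ/Mu := div_pos hMQpos hMupos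
  have hωspos : 0 < ωs := hωsdef ▸ Real.rpow_pos_of_pos hratpos _
  have hI1 : ωs ^ (θ - 1) = Mu/MQ := by
    rw [hωsdef, ← Real.rpow_mul hratpos.le]
    rw [show (1:ℝ)/(1-θ)*(θ-1) = -1 by
      rw [div_mul_eq_mul_div, one_mul, div_eq_iff h1θ.ne']
      ring]
    rw [Real.rpow_neg_one, inv_div]
  have hI2 : ωs ^ θ = MQ^σ / Mu^σ := by
    rw [hωsdef, ← Real.rpow_mul hratpos.le]
    rw [show (1:ℝ)/(1-θ)*θ = σ by
      rw [div_mul_eq_mul_div, one_mul, div_eq_iff h1θ.ne']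
      linear_combination -hσθ]
    exact Real.div_rpow hMQpos.le hMupos.le σ
  have hI3 : ωs ^ θ = (Mu/MQ) * ωs := by
    have h' : ωs ^ θ = ωs ^ (θ-1) * ωs ^ (1:ℝ) := by
      rw [← Real.rpow_add hωspos]
      norm_num
    rw [h', hI1, Real.rpow_one]
  have hhalfMu : θ * (ωs ^ θ * S) = ωs/2 * Mu := by
    rw [hI3]
    have hθS : θ * S = MQ/2 := by linarith
    have h' : θ * ((Mu/MQ) * ωs * S) = (θ*S) * ((Mu/MQ) * ωs) := by ring
    rw [h', hθS]
    field_simp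
  have key : ∀ ω : ℝ, 0 < ω → ω ^ θ * S - ω/2 * Mu ≤ (1-θ) * (ωs ^ θ * S) := by
    intro ω hω
    have hgm := Real.geom_mean_le_arith_mean2_weighted hθ0.le h1θ.le
      (le_of_lt (div_pos hω hωspos)) zero_le_one (by ring)
    rw [Real.one_rpow, mul_one, mul_one] at hgm
    have hsplit : ω ^ θ = (ω/ωs) ^ θ * ωs ^ θ := by
      rw [← Real.mul_rpow (le_of_lt (div_pos hω hωspos)) hωspos.le,
        div_mul_cancel₀ _ hωspos.ne']
    have hfacpos : 0 < ωs ^ θ * S := mul_pos (Real.rpow_pos_of_pos hωspos θ) hSpos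
    have h2 : θ * (ω/ωs) * (ωs ^ θ * S) = ω/2 * Mu := by
      have h'' : θ * (ω/ωs) * (ωs ^ θ * S) = (ω/ωs) * (θ * (ωs ^ θ * S)) := by ring
      rw [h'', hhalfMu]
      field_simp
    have h3 : ω ^ θ * S ≤ ω/2*Mu + (1-θ)*(ωs^θ*S) := by
      calc ω ^ θ * S = (ω/ωs) ^ θ * (ωs ^ θ * S) := by rw [hsplit]; ring
      _ ≤ (θ * (ω/ωs) + (1-θ)) * (ωs ^ θ * S) :=
          mul_le_mul_of_nonneg_right hgm hfacpos.le
      _ = θ * (ω/ωs) * (ωs ^ θ * S) + (1-θ)*(ωs^θ*S) := by ring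
      _ = ω/2*Mu + (1-θ)*(ωs^θ*S) := by rw [h2]
    linarith
  have heq : ωs ^ θ * S - ωs/2 * Mu = (1-θ) * (ωs ^ θ * S) := by
    linear_combination hhalfMu
  have hC : (1-θ) * (ωs ^ θ * S) = EQ * MQ^σ / Mu^σ := by
    rw [hI2, hEQval]
    ring
  have hSfun : ∀ ω : ℝ, Sfun n b c p ω V u₀ = E + ω/2 * Mu := by
    intro ω
    rw [hEdef, hMudef]
    unfold Sfun Ebv
    ring
  have hMuσ : 0 < Mu ^ σ := Real.rpow_pos_of_pos hMupos σ
  constructor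
  · intro h
    refine ⟨ωs, hωspos, ?_⟩
    rw [hSfun ωs]
    have hlt : E < EQ * MQ^σ / Mu^σ := (lt_div_iff₀ hMuσ).mpr h
    linarith
  · rintro ⟨ω, hω, hlt⟩
    rw [hSfun ω] at hlt
    have h2 := key ω hω
    have hE : E < EQ * MQ^σ / Mu^σ := by linarith
    exact (lt_div_iff₀ hMuσ).mp hE
end
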